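/- arXiv:2005.10800 — 2 statements merged into one kernel-verified Lean document; each statement's English description precedes it below -/
import Mathlib

section
/- Every rank-maximal matching of a bipartite graph with ranked edges is a maximum-cardinality matching, provided that in the rank structure every edge incident to a vertex class T_i has rank i and the partition T_1,...,T_k covers one side of the graph. More precisely: in the bipartite graph H = (C ∪ P, E_t) where each edge incident to a vertex of T_i has rank i (so every edge incident to a given vertex of C has the same rank), any rank-maximal matching is a maximum matching. -/
open Finset

section RMaux

variable {C P : Type*} [Fintype C] [DecidableEq C] [Fintype P] [DecidableEq P]

/-- Neighbors of a single `C`-vertex. -/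
def rmNbr (E : Finset (C × P)) (c : C) : Finset P :=
  (E.filter (fun e => e.1 = c)).image Prod.snd

/-- Neighbors of a set of `C`-vertices. -/
def rmNb (E : Finset (C × P)) (A : Finset C) : Finset P := A.biUnion (rmNbr E)

lemma rm_mem_nbr {E : Finset (C × P)} {c : C} {p : P} :
    p ∈ rmNbr E c ↔ (c, p) ∈ E := by
  simp only [rmNbr, mem_image, mem_filter]
  constructor
  · rintro ⟨⟨a, b⟩, ⟨hE, h1⟩, h2⟩
    simp only at h1 h2
    subst h1; subst h2; exact hE
  · intro h; exact ⟨(c, p), ⟨h, rfl⟩, rfl⟩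

lemma rmNb_mono (E : Finset (C × P)) {A B : Finset C} (h : A ⊆ B) :
    rmNb E A ⊆ rmNb E B :=
  biUnion_subset_biUnion_of_subset_left _ h

lemma rmNb_union (E : Finset (C × P)) (A B : Finset C) :
    rmNb E (A ∪ B) = rmNb E A ∪ rmNb E B := by
  ext p
  simp only [rmNb, mem_biUnion, mem_union]
  constructor
  · rintro ⟨c, hc | hc, hp⟩
    · exact Or.inl ⟨c, hc, hp⟩
    · exact Or.inr ⟨c, hc, hp⟩
  · rintro (⟨c, hc, hp⟩ | ⟨c, hc, hp⟩)
    · exact ⟨c, Or.inl hc, hp⟩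
    · exact ⟨c, Or.inr hc, hp⟩

/-- Hall condition for a subset of `C`. -/
def rmHall (E : Finset (C × P)) (S : Finset C) : Prop :=
  ∀ A ⊆ S, A.card ≤ (rmNb E A).card

/-- The union of two tight sets inside a Hall set is tight (submodularity). -/
lemma rm_tight_union {E : Finset (C × P)} {S B₁ B₂ : Finset C} (hS : rmHall E S)
    (h1 : B₁ ⊆ S) (h2 : B₂ ⊆ S)
    (t1 : (rmNb E B₁).card ≤ B₁.card) (t2 : (rmNb E B₂).card ≤ B₂.card) :
    (rmNb E (B₁ ∪ B₂)).card ≤ (B₁ ∪ B₂).card := by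
  have hint : (B₁ ∩ B₂).card ≤ (rmNb E (B₁ ∩ B₂)).card :=
    hS _ (le_trans inter_subset_left h1)
  have hsub : rmNb E (B₁ ∩ B₂) ⊆ rmNb E B₁ ∩ rmNb E B₂ :=
    subset_inter (rmNb_mono E inter_subset_left) (rmNb_mono E inter_subset_right)
  have h3 : (rmNb E (B₁ ∩ B₂)).card ≤ (rmNb E B₁ ∩ rmNb E B₂).card := card_le_card hsub
  have key : (rmNb E B₁ ∪ rmNb E B₂).card + (rmNb E B₁ ∩ rmNb E B₂).card
      = (rmNb E B₁).card + (rmNb E B₂).card := card_union_add_card_inter _ _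
  have key2 : (B₁ ∪ B₂).card + (B₁ ∩ B₂).card = B₁.card + B₂.card :=
    card_union_add_card_inter _ _
  have heq : (rmNb E (B₁ ∪ B₂)).card = (rmNb E B₁ ∪ rmNb E B₂).card := by
    rw [rmNb_union]
  omega

/-- A union of a finite family of tight sets is tight. -/
lemma rm_tight_biUnion {E : Finset (C × P)} {S : Finset C} (hS : rmHall E S)
    {ι : Type*} [DecidableEq ι] (I : Finset ι) (g : ι → Finset C)
    (hsub : ∀ i ∈ I, g i ⊆ S) (ht : ∀ i ∈ I, (rmNb E (g i)).card ≤ (g i).card) :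
    I.biUnion g ⊆ S ∧ (rmNb E (I.biUnion g)).card ≤ (I.biUnion g).card := by
  induction I using Finset.induction with
  | empty => simp [rmNb]
  | @insert a I ha ih =>
    have hI := ih (fun i hi => hsub i (mem_insert_of_mem hi))
      (fun i hi => ht i (mem_insert_of_mem hi))
    rw [biUnion_insert]
    constructor
    · exact union_subset (hsub a (mem_insert_self a I)) hI.1
    · exact rm_tight_union hS (hsub a (mem_insert_self a I)) hI.1
        (ht a (mem_insert_self a I)) hI.2

/-- `S` is matchable: there is an injection of `S` into `P` along edges of `E`. -/
def rmMatchable (E : Finset (C × P)) (S : Finset C) : Prop :=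
  ∃ f : {x // x ∈ S} → P, Function.Injective f ∧ ∀ x : {x // x ∈ S}, (x.1, f x) ∈ E

lemma rm_matchable_iff_hall (E : Finset (C × P)) (S : Finset C) :
    rmMatchable E S ↔ rmHall E S := by
  constructor
  · rintro ⟨f, hinj, hfE⟩ A hA
    classical
    have : ∀ x : {x // x ∈ A}, f ⟨x.1, hA x.2⟩ ∈ rmNb E A := by
      intro x
      exact mem_biUnion.mpr ⟨x.1, x.2, rm_mem_nbr.mpr (hfE ⟨x.1, hA x.2⟩)⟩
    have hinj2 : Function.Injective (fun x : {x // x ∈ A} =>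
        (⟨f ⟨x.1, hA x.2⟩, this x⟩ : {p // p ∈ rmNb E A})) := by
      intro x y hxy
      have := hinj (Subtype.mk_eq_mk.mp hxy)
      exact Subtype.ext (Subtype.mk_eq_mk.mp this)
    have := Fintype.card_le_of_injective _ hinj2
    simpa [Fintype.card_coe] using this
  · intro hall
    have key : ∀ s : Finset {x // x ∈ S}, s.card ≤ (s.biUnion (fun x => rmNbr E x.1)).card := by
      intro s
      have h1 : s.card = (s.image Subtype.val).card :=
        (card_image_of_injective s Subtype.val_injective).symm
      have h2 : s.biUnion (fun x => rmNbr E x.1) = rmNb E (s.image Subtype.val) := by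
        unfold rmNb
        rw [image_biUnion]
      rw [h1, h2]
      exact hall _ (fun c hc => by
        obtain ⟨x, _, hx⟩ := mem_image.mp hc
        exact hx ▸ x.2)
    obtain ⟨f, hinj, hf⟩ :=
      (Finset.all_card_le_biUnion_card_iff_exists_injective (fun x : {x // x ∈ S} => rmNbr E x.1)).mp key
    exact ⟨f, hinj, fun x => rm_mem_nbr.mp (hf x)⟩

/-- A matching yields matchability of its `C`-support. -/
lemma rm_matching_matchable {E : Finset (C × P)} (M : Finset (C × P)) (hsub : M ⊆ E)
    (hprop : ∀ e ∈ M, ∀ e' ∈ M, e ≠ e' → e.1 ≠ e'.1 ∧ e.2 ≠ e'.2) :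
    rmMatchable E (M.image Prod.fst) := by
  have hex : ∀ x : {c // c ∈ M.image Prod.fst}, ∃ p, (x.1, p) ∈ M := by
    rintro ⟨c, hc⟩
    obtain ⟨e, he, heq⟩ := mem_image.mp hc
    exact ⟨e.2, by simpa [← heq] using he⟩
  choose f hf using hex
  refine ⟨f, ?_, fun x => hsub (hf x)⟩
  intro x y hxy
  by_contra hne
  have hfst : x.1 ≠ y.1 := fun h => hne (Subtype.ext h)
  have hpairs : (x.1, f x) ≠ (y.1, f y) := fun h => hfst (congrArg Prod.fst h)
  exact (hprop _ (hf x) _ (hf y) hpairs).2 (by simpa using hxy)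

/-- Matchability of `T` yields a matching with `C`-support exactly `T`. -/
lemma rm_matchable_matching (E : Finset (C × P)) (T : Finset C) (h : rmMatchable E T) :
    ∃ N : Finset (C × P), N ⊆ E ∧
      (∀ e ∈ N, ∀ e' ∈ N, e ≠ e' → e.1 ≠ e'.1 ∧ e.2 ≠ e'.2) ∧
      N.image Prod.fst = T ∧ N.card = T.card := by
  obtain ⟨f, hinj, hfE⟩ := h
  classical
  refine ⟨T.attach.image (fun x => (x.1, f x)), ?_, ?_, ?_, ?_⟩
  · intro e he
    obtain ⟨x, _, hx⟩ := mem_image.mp he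
    exact hx ▸ hfE x
  · intro e he e' he' hne
    obtain ⟨x, _, hx⟩ := mem_image.mp he
    obtain ⟨y, _, hy⟩ := mem_image.mp he'
    subst hx; subst hy
    have hxy : x ≠ y := fun h => hne (by rw [h])
    constructor
    · exact fun h => hxy (Subtype.ext h)
    · exact fun h => hxy (hinj h)
  · ext c
    simp only [image_image, Function.comp, mem_image, mem_attach, true_and, Subtype.exists,
      exists_prop, exists_eq_right]
  · rw [card_image_of_injective, card_attach]
    intro x y hxy
    exact Subtype.ext (congrArg Prod.fst hxy)

/-- Profile of a matching in terms of its `C`-support. -/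
lemma rm_profile_eq (rank : C → ℕ) (M : Finset (C × P))
    (hprop : ∀ e ∈ M, ∀ e' ∈ M, e ≠ e' → e.1 ≠ e'.1 ∧ e.2 ≠ e'.2) (j : ℕ) :
    (M.filter fun e => rank e.1 = j).card
      = ((M.image Prod.fst).filter fun c => rank c = j).card := by
  have h1 : (M.filter fun e => rank e.1 = j).image Prod.fst
      = (M.image Prod.fst).filter fun c => rank c = j := by
    rw [filter_image]
  rw [← h1]
  refine (card_image_of_injOn ?_).symm
  intro e he e' he' hfst
  by_contra hne
  exact (hprop e (filter_subset _ _ he) e' (filter_subset _ _ he') hne).1 hfst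

/-- Exchange property (transversal matroid): a smaller Hall set can be augmented by
a vertex while keeping the Hall condition. -/
lemma rm_exchange {E : Finset (C × P)} {S S' : Finset C}
    (hS : rmHall E S) (hS' : rmHall E S') (hcard : S.card < S'.card) :
    ∃ c ∉ S, rmHall E (insert c S) := by
  classical
  by_contra hcon
  push_neg at hcon
  have key : ∀ c ∈ S' \ S, ∃ B, B ⊆ S ∧ (rmNb E B).card ≤ B.card ∧ rmNbr E c ⊆ rmNb E B := by
    intro c hc
    have hcS : c ∉ S := (mem_sdiff.mp hc).2
    have hnh := hcon c hcS
    rw [rmHall] at hnh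
    push_neg at hnh
    obtain ⟨A, hA, hAcard⟩ := hnh
    have hcA : c ∈ A := by
      by_contra h
      have hAS : A ⊆ S := by
        intro x hx
        rcases mem_insert.mp (hA hx) with h1 | h1
        · exact absurd (h1 ▸ hx) h
        · exact h1
      exact absurd (hS A hAS) (not_le.mpr hAcard)
    set B := A.erase c with hBdef
    have hBS : B ⊆ S := by
      intro x hx
      have hxA := mem_of_mem_erase hx
      rcases mem_insert.mp (hA hxA) with h1 | h1
      · exact absurd h1 (ne_of_mem_erase hx)
      · exact h1
    have hApos : 0 < A.card := card_pos.mpr ⟨c, hcA⟩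
    have hcardA : A.card = B.card + 1 := by
      rw [hBdef, card_erase_of_mem hcA]
      omega
    have h1 : B.card ≤ (rmNb E B).card := hS B hBS
    have h2 : rmNb E B ⊆ rmNb E A := rmNb_mono E (erase_subset _ _)
    have h3 : (rmNb E B).card ≤ B.card := by
      have := card_le_card h2
      omega
    have heq : rmNb E B = rmNb E A := by
      apply eq_of_subset_of_card_le h2
      have := card_le_card h2
      omega
    refine ⟨B, hBS, h3, ?_⟩
    rw [heq]
    exact fun p hp => mem_biUnion.mpr ⟨c, hcA, hp⟩
  choose! Bf hB1 hB2 hB3 using key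
  set B : Finset C := (S' \ S).biUnion Bf with hBdef
  obtain ⟨hBS, hBt⟩ := rm_tight_biUnion hS (S' \ S) Bf hB1 hB2
  set A : Finset C := (S' \ S) ∪ (S' ∩ B) with hAdef
  have hAS' : A ⊆ S' := union_subset sdiff_subset inter_subset_left
  have hnbA : rmNb E A ⊆ rmNb E B := by
    rw [hAdef, rmNb_union]
    apply union_subset
    · intro p hp
      obtain ⟨c, hc, hpc⟩ := mem_biUnion.mp hp
      exact rmNb_mono E (subset_biUnion_of_mem Bf hc) (hB3 c hc hpc)
    · exact rmNb_mono E inter_subset_right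
  have h4 : (rmNb E A).card ≤ B.card := le_trans (card_le_card hnbA) hBt
  have h5 : A.card ≤ (rmNb E A).card := hS' A hAS'
  have hdisj : Disjoint (S' \ S) (S' ∩ B) := by
    apply Finset.disjoint_left.mpr
    intro x hx hx2
    exact (mem_sdiff.mp hx).2 (hBS (mem_inter.mp hx2).2)
  have hAcard : A.card = (S' \ S).card + (S' ∩ B).card := card_union_of_disjoint hdisj
  have hB6 : (B \ S').card ≤ (S \ S').card :=
    card_le_card (sdiff_subset_sdiff hBS (le_refl _))
  have hBcard : (B \ S').card + (B ∩ S').card = B.card := by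
    rw [card_sdiff_add_card_inter]
  have hS1 : (S \ S').card + (S ∩ S').card = S.card := card_sdiff_add_card_inter _ _
  have hS2 : (S' \ S).card + (S' ∩ S).card = S'.card := card_sdiff_add_card_inter _ _
  have hSS : (S ∩ S').card = (S' ∩ S).card := by rw [inter_comm]
  have hBB : (B ∩ S').card = (S' ∩ B).card := by rw [inter_comm]
  omega

end RMaux

/-- In a bipartite graph `H = (C ∪ P, E)` where every edge incident to a vertex of
`C` has the rank of that vertex (edges incident to the class `T_i` have rank `i`),
any rank-maximal matching (one whose rank profile is lexicographically maximal) is a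
maximum-cardinality matching. -/
theorem stmt_13 {C P : Type*} [Fintype C] [DecidableEq C] [Fintype P] [DecidableEq P]
    (E : Finset (C × P)) (rank : C → ℕ)
    (IsMatching : Finset (C × P) → Prop)
    (hIsMatching : ∀ M, IsMatching M ↔ M ⊆ E ∧
      ∀ e ∈ M, ∀ e' ∈ M, e ≠ e' → e.1 ≠ e'.1 ∧ e.2 ≠ e'.2)
    (profile : Finset (C × P) → ℕ → ℕ)
    (hprofile : ∀ M i, profile M i = (M.filter fun e => rank e.1 = i).card)
    (M : Finset (C × P)) (hM : IsMatching M)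
    (hrankmax : ∀ M', IsMatching M' →
      ¬ ∃ i, (∀ j < i, profile M j = profile M' j) ∧ profile M i < profile M' i) :
    ∀ M', IsMatching M' → M'.card ≤ M.card := by
  intro M' hM'
  by_contra hlt
  push_neg at hlt
  obtain ⟨hMsubE, hMprop⟩ := (hIsMatching M).mp hM
  obtain ⟨hM'subE, hM'prop⟩ := (hIsMatching M').mp hM'
  set S := M.image Prod.fst with hSdef
  set S' := M'.image Prod.fst with hS'def
  have hSM : S.card = M.card := by
    apply card_image_of_injOn
    intro e he e' he' h
    by_contra hne
    exact (hMprop e he e' he' hne).1 h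
  have hS'M : S'.card = M'.card := by
    apply card_image_of_injOn
    intro e he e' he' h
    by_contra hne
    exact (hM'prop e he e' he' hne).1 h
  have hallS : rmHall E S := (rm_matchable_iff_hall E S).mp (rm_matching_matchable M hMsubE hMprop)
  have hallS' : rmHall E S' :=
    (rm_matchable_iff_hall E S').mp (rm_matching_matchable M' hM'subE hM'prop)
  obtain ⟨c, hcS, hallc⟩ := rm_exchange hallS hallS' (by omega)
  obtain ⟨N, hNsub, hNprop, hNim, hNcard⟩ :=
    rm_matchable_matching E (insert c S) ((rm_matchable_iff_hall E (insert c S)).mpr hallc)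
  apply hrankmax N ((hIsMatching N).mpr ⟨hNsub, hNprop⟩)
  refine ⟨rank c, ?_, ?_⟩
  · intro j hj
    rw [hprofile, hprofile, rm_profile_eq rank M hMprop, rm_profile_eq rank N hNprop, hNim,
      filter_insert, if_neg (by omega)]
  · rw [hprofile, hprofile, rm_profile_eq rank M hMprop, rm_profile_eq rank N hNprop, hNim,
      filter_insert, if_pos rfl,
      card_insert_of_notMem (fun h => hcS (filter_subset _ _ h))]
    simp only [hSdef]
    omega
end

section
/- Let Z1, Z2 ⊆ K with |K| = 20, |Z1| ≤ 10, |Z2| ≤ 10, and |Z1' ∩ Z2'| ≤ 5 for given Z1' ⊆ Z1 ∩ Z2, Z2' ⊆ Z1 ∩ Z2. Then K can be partitioned into two 10-element sets Z⁻ and Z⁺ such that |Z⁻ \ Z1| ≥ 5 and |Z⁺ \ Z2| ≥ 5. -/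
/-!
Remove from the palette a set `E ⊆ Z1` of `e = a + |Z1| - n` colours and take for `Z⁻` any `n`-set
with `Z2 \ E ⊆ Z⁻ ⊆ K \ E`. Then `Z⁻ ∩ Z1 ⊆ Z1 \ E` and `Z⁺ ∩ Z2 ⊆ E`, so `|Z⁻ \ Z1| ≥ n - |Z1| + e ≥ a`
and `|Z⁺ \ Z2| ≥ n - e ≥ b`, the latter because `e ≤ a ≤ n - b`.
-/

namespace Finset

variable {α : Type*} [DecidableEq α]

lemma card_sub_card_le_card_sdiff_of_inter_subset {s t u : Finset α} (h : s ∩ t ⊆ u) :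
    #s - #u ≤ #(s \ t) :=
  (le_card_sdiff u s).trans <| card_le_card fun x hx => by
    simp only [mem_sdiff] at hx ⊢
    exact ⟨hx.1, fun hxt => hx.2 (h (mem_inter.2 ⟨hx.1, hxt⟩))⟩

theorem exists_halves_card_sdiff_ge {K Z1 Z2 : Finset α} {n a b : ℕ} (hK : #K = 2 * n)
    (h1 : Z1 ⊆ K) (h2 : Z2 ⊆ K) (hc1 : #Z1 ≤ n) (hc2 : #Z2 ≤ n) (hab : a + b ≤ n) :
    ∃ Zm Zp : Finset α, Zm ∪ Zp = K ∧ Disjoint Zm Zp ∧ #Zm = n ∧ #Zp = n ∧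
      a ≤ #(Zm \ Z1) ∧ b ≤ #(Zp \ Z2) := by
  obtain ⟨E, hEZ1, hE⟩ := exists_subset_card_eq (s := Z1) (n := a + #Z1 - n) (by omega)
  have hEK : #(K \ E) = 2 * n - #E := by rw [card_sdiff_of_subset (hEZ1.trans h1), hK]
  obtain ⟨Zm, hZ2Zm, hZmK, hZm⟩ := exists_subsuperset_card_eq (t := K \ E) (n := n)
    (sdiff_subset_sdiff h2 le_rfl) ((card_le_card sdiff_subset).trans hc2) (by omega)
  have hZmK' : Zm ⊆ K := hZmK.trans sdiff_subset
  refine ⟨Zm, K \ Zm, union_sdiff_of_subset hZmK', disjoint_sdiff, hZm, ?_, ?_, ?_⟩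
  · rw [card_sdiff_of_subset hZmK', hK, hZm]
    omega
  · have hZmZ1 : Zm ∩ Z1 ⊆ Z1 \ E := fun x hx =>
      mem_sdiff.2 ⟨(mem_inter.1 hx).2, (mem_sdiff.1 (hZmK (mem_inter.1 hx).1)).2⟩
    have := card_sub_card_le_card_sdiff_of_inter_subset hZmZ1
    rw [card_sdiff_of_subset hEZ1, hZm] at this
    omega
  · have hZpZ2 : (K \ Zm) ∩ Z2 ⊆ E := fun x hx => by
      by_contra hxE
      exact (mem_sdiff.1 (mem_inter.1 hx).1).2 (hZ2Zm (mem_sdiff.2 ⟨(mem_inter.1 hx).2, hxE⟩))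
    have := card_sub_card_le_card_sdiff_of_inter_subset hZpZ2
    rw [card_sdiff_of_subset hZmK', hK, hZm] at this
    omega

end Finset

theorem stmt_19_general (K Z1 Z2 : Finset ℕ) (hK : K.card = 20)
    (h1 : Z1 ⊆ K) (h2 : Z2 ⊆ K) (hc1 : Z1.card ≤ 10) (hc2 : Z2.card ≤ 10) :
    ∃ Zm Zp : Finset ℕ, Zm ∪ Zp = K ∧ Disjoint Zm Zp ∧
      Zm.card = 10 ∧ Zp.card = 10 ∧
      5 ≤ (Zm \ Z1).card ∧ 5 ≤ (Zp \ Z2).card :=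
  Finset.exists_halves_card_sdiff_ge (n := 10) hK h1 h2 hc1 hc2 le_rfl

/-- Given `Z1, Z2 ⊆ K` with `|K| = 20`, `|Z1| ≤ 10`, `|Z2| ≤ 10`, and
`|Z1' ∩ Z2'| ≤ 5` for given `Z1', Z2' ⊆ Z1 ∩ Z2`, the palette `K` can be partitioned
into two 10-element sets `Z⁻` and `Z⁺` with `|Z⁻ \ Z1| ≥ 5` and `|Z⁺ \ Z2| ≥ 5`. -/
theorem stmt_19 (K Z1 Z2 Z1' Z2' : Finset ℕ) (hK : K.card = 20)
    (h1 : Z1 ⊆ K) (h2 : Z2 ⊆ K) (hc1 : Z1.card ≤ 10) (hc2 : Z2.card ≤ 10)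
    (h1' : Z1' ⊆ Z1 ∩ Z2) (h2' : Z2' ⊆ Z1 ∩ Z2) (h12' : (Z1' ∩ Z2').card ≤ 5) :
    ∃ Zm Zp : Finset ℕ, Zm ∪ Zp = K ∧ Disjoint Zm Zp ∧
      Zm.card = 10 ∧ Zp.card = 10 ∧
      5 ≤ (Zm \ Z1).card ∧ 5 ≤ (Zp \ Z2).card :=
  stmt_19_general K Z1 Z2 hK h1 h2 hc1 hc2
end
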